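/- arXiv:2011.11905 — 15 statements merged into one kernel-verified Lean document; each statement's English description precedes it below -/
import Mathlib

section
/- Let μ⁻, μ⁺, β⁻, β⁺ > 0, let t̄ ∈ ℝ² be a unit vector, set n̄ := (t̄₂, −t̄₁), let D ∈ ℝ², L > 0, and X_m := D + (L/2)·t̄. For any v = a + b(X₂,−X₁) in the lowest-order Nédélec space ND, define w(X) := v(X) + b₁·(X₂ − D₂, −(X₁ − D₁)) + b₂·n̄, where b₁ = (1/2)(1 − μ⁺/μ⁻)·curl v and b₂ = (β⁻/β⁺ − 1)·(v(X_m)·n̄) − b₁·L/2. Then w ∈ ND and w satisfies: (i) w(X_m)·t̄ = v(X_m)·t̄, (ii) (1/μ⁺)·curl w = (1/μ⁻)·curl v, and (iii) β⁺·(w(X_m)·n̄) = β⁻·(v(X_m)·n̄). -/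
noncomputable section

/-- Dot product on `ℝ²` (represented as `ℝ × ℝ`). -/
def dot2 (u v : ℝ × ℝ) : ℝ := u.1 * v.1 + u.2 * v.2

/-- The lowest-order Nédélec field with coefficients `a ∈ ℝ²`, `b ∈ ℝ`:
`X ↦ a + b • (X₂, -X₁)`. -/
def ndField (a : ℝ × ℝ) (b : ℝ) (X : ℝ × ℝ) : ℝ × ℝ :=
  (a.1 + b * X.2, a.2 - b * X.1)

/-- The (constant) curl of the Nédélec field with coefficients `(a, b)` is `-2b`. -/
def ndCurl (a : ℝ × ℝ) (b : ℝ) : ℝ := -2 * b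

/-- Explicit formula for the matching operator: for `v ∈ ND`, the field
`w(X) = v(X) + b₁ • R(X - D) + b₂ • n̄` with the stated coefficients `b₁, b₂` again belongs
to the lowest-order Nédélec space and satisfies the three interface conditions at the
midpoint `X_m = D + (L/2) t̄`. -/
theorem nedelec_matching_explicit_formula
    (μm μp βm βp : ℝ) (hμm : 0 < μm) (hμp : 0 < μp) (hβm : 0 < βm) (hβp : 0 < βp)
    (t : ℝ × ℝ) (ht : dot2 t t = 1)
    (n : ℝ × ℝ) (hn : n = (t.2, -t.1))
    (D : ℝ × ℝ) (L : ℝ) (hL : 0 < L)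
    (Xm : ℝ × ℝ) (hXm : Xm = D + (L / 2) • t)
    (a : ℝ × ℝ) (b : ℝ)
    (v : ℝ × ℝ → ℝ × ℝ) (hv : v = ndField a b)
    (b₁ b₂ : ℝ)
    (hb₁ : b₁ = (1 / 2) * (1 - μp / μm) * ndCurl a b)
    (hb₂ : b₂ = (βm / βp - 1) * dot2 (v Xm) n - b₁ * L / 2)
    (w : ℝ × ℝ → ℝ × ℝ)
    (hw : ∀ X : ℝ × ℝ, w X = v X + b₁ • ((X.2 - D.2, -(X.1 - D.1)) : ℝ × ℝ) + b₂ • n) :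
    ∃ (a' : ℝ × ℝ) (b' : ℝ),
      (∀ X, w X = ndField a' b' X) ∧
      dot2 (w Xm) t = dot2 (v Xm) t ∧
      (1 / μp) * ndCurl a' b' = (1 / μm) * ndCurl a b ∧
      βp * dot2 (w Xm) n = βm * dot2 (v Xm) n := by
  have hμm' := hμm.ne'
  have hμp' := hμp.ne'
  have hβp' := hβp.ne'
  have ht' : t.1 * t.1 + t.2 * t.2 = 1 := ht
  refine ⟨(a.1 - b₁ * D.2 + b₂ * n.1, a.2 + b₁ * D.1 + b₂ * n.2), b + b₁, ?_, ?_, ?_, ?_⟩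
  · intro X
    rw [hw, hv]
    simp [ndField, Prod.ext_iff, Prod.smul_def, smul_eq_mul]
    constructor <;> ring
  · rw [hw, hv, hXm, hn]
    simp [dot2, ndField, Prod.smul_def, smul_eq_mul]
    ring
  · rw [hb₁]
    simp only [ndCurl]
    field_simp
    ring
  · have hnn : dot2 n n = 1 := by
      rw [hn]; show t.2 * t.2 + -t.1 * -t.1 = 1; linear_combination ht'
    have hwXm : dot2 (w Xm) n = dot2 (v Xm) n + (b₁ * (L / 2) + b₂) * dot2 n n := by
      rw [hw Xm, hXm, hn]
      simp [dot2, Prod.smul_def, smul_eq_mul]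
      ring
    rw [hwXm, hnn, hb₂]
    field_simp
    ring
end
end

section
/- Let d, e, κ, λ, α, s₂, s₃ be real numbers with α ≠ 0, and define the 2×2 real matrices A = [[1, 0], [α, 2α]], R = de·[[−1, −1], [0, 1]], B = [[κ, κ], [−λs₂, −λs₃]]. Then the characteristic polynomial of M := I₂ + R A⁻¹ B factors as (X − (1 − deκ))·(X − (1 + deλ(s₂ − s₃)/(2α))); in particular the eigenvalues of M are exactly 1 − deκ and 1 + deλ(s₂ − s₃)/(2α). -/
noncomputable section

open Polynomial

private lemma quad_factor (a bc d r1 r2 : ℝ) (h1 : a + d = r1 + r2)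
    (h2 : a * d - bc = r1 * r2) :
    (X - C a) * (X - C d) - C bc = (X - C r1) * (X - C r2) := by
  have h1' : C (a + d) = C (r1 + r2) := by rw [h1]
  have h2' : C (a * d - bc) = C (r1 * r2) := by rw [h2]
  simp only [C_add, C_mul, C_sub] at h1' h2'
  linear_combination (-X : ℝ[X]) * h1' + h2'

/-- The characteristic polynomial of `I₂ + R A⁻¹ B` factors as
`(X - (1 - deκ)) (X - (1 + deλ(s₂ - s₃)/(2α)))`; in particular these two numbers are
exactly the eigenvalues of `I₂ + R A⁻¹ B`. -/
theorem charpoly_of_unisolvence_matrix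
    (d e κ lam α s₂ s₃ : ℝ) (hα : α ≠ 0)
    (A R B : Matrix (Fin 2) (Fin 2) ℝ)
    (hA : A = !![1, 0; α, 2 * α])
    (hR : R = (d * e) • !![-1, -1; 0, 1])
    (hB : B = !![κ, κ; -lam * s₂, -lam * s₃]) :
    (1 + R * A⁻¹ * B).charpoly =
      (X - C (1 - d * e * κ)) * (X - C (1 + d * e * lam * (s₂ - s₃) / (2 * α))) := by
  have hAinv : A⁻¹ = !![1, 0; -(1/2 : ℝ), 1 / (2 * α)] := by
    rw [Matrix.inv_eq_right_inv]
    rw [hA]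
    ext i j
    fin_cases i <;> fin_cases j <;>
      simp [Matrix.mul_apply, Fin.sum_univ_two] <;> field_simp <;> ring
  have hM : 1 + R * A⁻¹ * B =
      !![1 + d * e * (-κ/2 + lam * s₂ / (2*α)), d * e * (-κ/2 + lam * s₃ / (2*α));
         d * e * (-κ/2 - lam * s₂ / (2*α)), 1 + d * e * (-κ/2 - lam * s₃ / (2*α))] := by
    subst hR hB
    rw [hAinv]
    ext i j
    fin_cases i <;> fin_cases j <;>
      simp [Matrix.mul_apply, Fin.sum_univ_two, Matrix.one_apply] <;> field_simp <;> ring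
  rw [hM, Matrix.charpoly, Matrix.det_fin_two]
  rw [Matrix.charmatrix_apply_eq, Matrix.charmatrix_apply_eq,
    Matrix.charmatrix_apply_ne _ _ _ (by decide), Matrix.charmatrix_apply_ne _ _ _ (by decide)]
  norm_num [Matrix.cons_val_zero, Matrix.cons_val_one, Matrix.head_cons]
  simp only [← C_1, ← C_mul, ← C_add, ← C_sub]
  apply quad_factor <;> field_simp <;> ring
end
end

section
/- Let d, e ∈ [0,1], let n̂₁, n̂₂ ∈ ℝ satisfy e·n̂₁ + d·n̂₂ > 0 and 0 ≤ de(n̂₁ + n̂₂)/(e·n̂₁ + d·n̂₂) ≤ 1, and let μ⁻, μ⁺, β⁻, β⁺ > 0. Set κ = 1 − μ⁺/μ⁻, λ = 1 − β⁻/β⁺, α = (e·n̂₁ + d·n̂₂)/2, s₂ = −(e/2)n̂₁ + (d/2 − 1)n̂₂, s₃ = (1 − e/2)n̂₁ + (d/2)n̂₂, and form the matrices A = [[1, 0], [α, 2α]], R = de·[[−1, −1], [0, 1]], B = [[κ, κ], [−λs₂, −λs₃]]. Then det(I₂ + R A⁻¹ B) ≥ min{1, μ⁺/μ⁻} · min{1,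 β⁻/β⁺} > 0; in particular the matrix I₂ + R A⁻¹ B is invertible. -/
noncomputable section

private lemma aux_min (x c : ℝ) (hx0 : 0 ≤ x) (hx1 : x ≤ 1) :
    min 1 (1 - c) ≤ 1 - x * c := by
  rcases le_total c 0 with h | h
  · have h1 := min_le_left (1:ℝ) (1 - c)
    nlinarith [mul_nonpos_of_nonneg_of_nonpos hx0 h]
  · have h1 := min_le_right (1:ℝ) (1 - c)
    nlinarith

/-- Unisolvence of the H(curl) IFE space: under the geometric conditions guaranteeing that
the triangle has no obtuse angles, the determinant of the coefficient matrix
`I₂ + R A⁻¹ B` is bounded below by `min{1, μ⁺/μ⁻} · min{1, β⁻/β⁺} > 0`; in particular the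
matrix is invertible. -/
theorem unisolvence_det_lower_bound
    (d e : ℝ) (hd : d ∈ Set.Icc (0 : ℝ) 1) (he : e ∈ Set.Icc (0 : ℝ) 1)
    (n₁ n₂ : ℝ) (hpos : 0 < e * n₁ + d * n₂)
    (hratio₀ : 0 ≤ d * e * (n₁ + n₂) / (e * n₁ + d * n₂))
    (hratio₁ : d * e * (n₁ + n₂) / (e * n₁ + d * n₂) ≤ 1)
    (μm μp βm βp : ℝ) (hμm : 0 < μm) (hμp : 0 < μp) (hβm : 0 < βm) (hβp : 0 < βp)
    (κ lam α s₂ s₃ : ℝ)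
    (hκ : κ = 1 - μp / μm) (hlam : lam = 1 - βm / βp)
    (hα : α = (e * n₁ + d * n₂) / 2)
    (hs₂ : s₂ = -(e / 2) * n₁ + (d / 2 - 1) * n₂)
    (hs₃ : s₃ = (1 - e / 2) * n₁ + (d / 2) * n₂)
    (A R B : Matrix (Fin 2) (Fin 2) ℝ)
    (hA : A = !![1, 0; α, 2 * α])
    (hR : R = (d * e) • !![-1, -1; 0, 1])
    (hB : B = !![κ, κ; -lam * s₂, -lam * s₃]) :
    0 < min 1 (μp / μm) * min 1 (βm / βp) ∧
    min 1 (μp / μm) * min 1 (βm / βp) ≤ (1 + R * A⁻¹ * B).det ∧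
    IsUnit (1 + R * A⁻¹ * B) := by
  have hαpos : 0 < α := by rw [hα]; linarith
  have hαne : α ≠ 0 := ne_of_gt hαpos
  have hAinv : A⁻¹ = !![1, 0; -(1/2), 1/(2*α)] := by
    apply Matrix.inv_eq_right_inv
    rw [hA]
    ext i j
    fin_cases i <;> fin_cases j <;>
      simp [Matrix.mul_apply, Fin.sum_univ_two, Matrix.one_apply] <;>
      field_simp <;> ring
  set T := d * e * (n₁ + n₂) / (e * n₁ + d * n₂) with hT
  have hdet : (1 + R * A⁻¹ * B).det = (1 - d * e * κ) * (1 - T * lam) := by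
    rw [hR, hB, hAinv, hT, hs₂, hs₃, hα]
    have hS : e * n₁ + d * n₂ ≠ 0 := ne_of_gt hpos
    simp [Matrix.det_fin_two, Matrix.mul_apply, Fin.sum_univ_two, Matrix.one_apply]
    field_simp
    ring
  have hde0 : 0 ≤ d * e := mul_nonneg hd.1 he.1
  have hde1 : d * e ≤ 1 := by nlinarith [hd.1, hd.2, he.1, he.2]
  have h1 : min 1 (μp / μm) ≤ 1 - d * e * κ := by
    have := aux_min (d * e) κ hde0 hde1
    rw [hκ] at *
    simpa using this
  have h2 : min 1 (βm / βp) ≤ 1 - T * lam := by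
    have := aux_min T lam hratio₀ hratio₁
    rw [hlam] at *
    simpa using this
  have hm1 : 0 < min 1 (μp / μm) := lt_min one_pos (div_pos hμp hμm)
  have hm2 : 0 < min 1 (βm / βp) := lt_min one_pos (div_pos hβm hβp)
  have hprod : 0 < min 1 (μp / μm) * min 1 (βm / βp) := mul_pos hm1 hm2
  have hle : min 1 (μp / μm) * min 1 (βm / βp) ≤ (1 + R * A⁻¹ * B).det := by
    rw [hdet]
    exact mul_le_mul h1 h2 hm2.le (by linarith)
  refine ⟨hprod, hle, ?_⟩
  rw [Matrix.isUnit_iff_isUnit_det]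
  exact isUnit_iff_ne_zero.mpr (by nlinarith)
end
end

section
/- Let l₂, l₃ > 0, θ ∈ (0, π/2], and δ ∈ [θ − π/2, π/2]. If l₂ ≥ l₃·cos θ and l₃ ≥ l₂·cos θ, then l₂·sin(θ − δ) + l₃·sin δ ≥ 0. -/
/-- If a triangle has no obtuse angles (expressed by `l₂ ≥ l₃ cos θ` and `l₃ ≥ l₂ cos θ`
for the vertex angle `θ ∈ (0, π/2]` and adjacent side lengths `l₂, l₃ > 0`), then for any
angle `δ ∈ [θ - π/2, π/2]` one has `l₂ sin(θ - δ) + l₃ sin δ ≥ 0`. -/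
theorem no_obtuse_normal_component_nonneg
    (l₂ l₃ θ δ : ℝ) (hl₂ : 0 < l₂) (hl₃ : 0 < l₃)
    (hθ₀ : 0 < θ) (hθ₁ : θ ≤ Real.pi / 2)
    (hδ₀ : θ - Real.pi / 2 ≤ δ) (hδ₁ : δ ≤ Real.pi / 2)
    (h₂ : l₃ * Real.cos θ ≤ l₂) (h₃ : l₂ * Real.cos θ ≤ l₃) :
    0 ≤ l₂ * Real.sin (θ - δ) + l₃ * Real.sin δ := by
  have hπ := Real.pi_pos
  have hsθ : 0 ≤ Real.sin θ :=
    Real.sin_nonneg_of_nonneg_of_le_pi hθ₀.le (by linarith)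
  have hcδ : 0 ≤ Real.cos δ :=
    Real.cos_nonneg_of_mem_Icc ⟨by linarith, hδ₁⟩
  have key : l₂ * Real.sin (θ - δ) + l₃ * Real.sin δ
      = l₂ * Real.sin θ * Real.cos δ + Real.sin δ * (l₃ - l₂ * Real.cos θ) := by
    rw [Real.sin_sub]; ring
  rw [key]
  have hc3 : 0 ≤ l₃ - l₂ * Real.cos θ := by linarith
  rcases le_or_gt 0 (Real.sin δ) with h | h
  · have h1 := mul_nonneg (mul_nonneg hl₂.le hsθ) hcδ
    have h2 := mul_nonneg h hc3
    linarith
  · have hδneg : δ < 0 := by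
      by_contra hcon
      push_neg at hcon
      exact absurd (Real.sin_nonneg_of_nonneg_of_le_pi hcon (by linarith)) (not_le.2 h)
    have h1 : Real.sin (-δ) ≤ Real.cos θ := by
      rw [← Real.sin_pi_div_two_sub θ]
      apply Real.sin_le_sin_of_le_of_le_pi_div_two (by linarith) (by linarith) (by linarith)
    have h2 : Real.sin θ ≤ Real.cos δ := by
      rw [← Real.cos_pi_div_two_sub θ, ← Real.cos_neg δ]
      exact Real.cos_le_cos_of_nonneg_of_le_pi (by linarith) (by linarith) (by linarith)
    have h3 : Real.sin (-δ) = -Real.sin δ := Real.sin_neg δ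
    have h4 : -Real.sin δ * (l₃ - l₂ * Real.cos θ) ≤ Real.cos θ * (l₃ - l₂ * Real.cos θ) := by
      apply mul_le_mul_of_nonneg_right _ hc3
      linarith
    have h5 : l₂ * Real.sin θ * Real.sin θ ≤ l₂ * Real.sin θ * Real.cos δ := by
      apply mul_le_mul_of_nonneg_left h2 (mul_nonneg hl₂.le hsθ)
    have h6 := Real.sin_sq_add_cos_sq θ
    nlinarith [sq_nonneg (Real.sin θ), sq_nonneg (Real.cos θ)]
end

section
/- Let d, e ∈ [0,1], let p, q > 0, and let c ≥ 0 satisfy p ≥ q·c and q ≥ p·c. Then e²(1 − d)·p² + d²(1 − e)·q² ≥ (2de − d²e − e²d)·p·q·c. -/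
/-- Key inequality in the unisolvence proof: for intersection ratios `d, e ∈ [0,1]`, side
lengths `p, q > 0` and cosine `c ≥ 0` of the vertex angle with `p ≥ qc` and `q ≥ pc`
(no obtuse angles), one has
`e²(1 - d) p² + d²(1 - e) q² ≥ (2de - d²e - e²d) p q c`. -/
theorem interface_ratio_key_inequality
    (d e : ℝ) (hd : d ∈ Set.Icc (0 : ℝ) 1) (he : e ∈ Set.Icc (0 : ℝ) 1)
    (p q c : ℝ) (hp : 0 < p) (hq : 0 < q) (hc : 0 ≤ c)
    (hpc : q * c ≤ p) (hqc : p * c ≤ q) :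
    (2 * d * e - d ^ 2 * e - e ^ 2 * d) * p * q * c ≤
      e ^ 2 * (1 - d) * p ^ 2 + d ^ 2 * (1 - e) * q ^ 2 := by
  obtain ⟨hd0, hd1⟩ := hd
  obtain ⟨he0, he1⟩ := he
  have h1 : p * q * c ≤ p ^ 2 := by nlinarith
  have h2 : p * q * c ≤ q ^ 2 := by nlinarith
  have h3 : 0 ≤ p * q * c := by positivity
  nlinarith [mul_nonneg (mul_nonneg (sq_nonneg e) (sub_nonneg.2 hd1)) (sub_nonneg.2 h1),
    mul_nonneg (mul_nonneg (sq_nonneg d) (sub_nonneg.2 he1)) (sub_nonneg.2 h2),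
    mul_nonneg (sq_nonneg (e - d)) h3]
end

section
/- Let d, e ∈ ℝ with d² + e² ≠ 0, set n = (e, d)/√(d² + e²) ∈ ℝ², and let ρ ∈ ℝ. Then diag(1 − d, 1 − e) + diag(d, e)·(I₂ + (ρ − 1)·n nᵗ) = I₂ + (ρ − 1)·A₁, where A₁ = (de/(d² + e²))·[[e, d], [e, d]]. Equivalently, with Q the orthogonal matrix whose rows are t = (−n₂, n₁) and n, and Λ = diag(1, ρ), one has diag(1 − d, 1 − e) + diag(d, e)·Qᵗ Λ Q = I₂ + (ρ − 1)·A₁. -/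
/-!
The diagonal parts sum to `I₂`, so it remains to see `diag(d, e) · n nᵗ = A₁`. Writing
`n = (d² + e²)^(-1/2) • (e, d)` gives `n nᵗ = (d² + e²)⁻¹ • (e, d)(e, d)ᵗ`, and multiplying the
rank-one matrix `(e, d)(e, d)ᵗ` on the left by `diag(d, e)` yields `de • [[e, d], [e, d]]`.
-/

open Matrix

theorem Matrix.vecMulVec_smul_smul_self {R m : Type*} [CommSemiring R] (c : R) (v : m → R) :
    vecMulVec (c • v) (c • v) = (c * c) • vecMulVec v v := by
  rw [smul_vecMulVec, vecMulVec_smul, smul_smul]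

theorem Real.vecMulVec_inv_sqrt_smul_self {m : Type*} {s : ℝ} (hs : 0 ≤ s) (v : m → ℝ) :
    vecMulVec ((√s)⁻¹ • v) ((√s)⁻¹ • v) = s⁻¹ • vecMulVec v v := by
  rw [vecMulVec_smul_smul_self, ← mul_inv, Real.mul_self_sqrt hs]

theorem diag_mul_vecMulVec_swap (d e : ℝ) :
    !![d, 0; 0, e] * vecMulVec ![e, d] ![e, d] = (d * e) • !![e, d; e, d] := by
  ext i j
  fin_cases i <;> fin_cases j <;> simp [Matrix.mul_apply, Fin.sum_univ_two] <;> ring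

theorem diag_add_diag_one_sub (d e : ℝ) : !![1 - d, 0; 0, 1 - e] + !![d, 0; 0, e] = 1 := by
  ext i j
  fin_cases i <;> fin_cases j <;> simp

theorem case_one_interpolation_matrix_identity_general
    (d e : ℝ) (ρ : ℝ)
    (n : Fin 2 → ℝ)
    (hn : n = ![e / Real.sqrt (d ^ 2 + e ^ 2), d / Real.sqrt (d ^ 2 + e ^ 2)])
    (A₁ : Matrix (Fin 2) (Fin 2) ℝ)
    (hA₁ : A₁ = (d * e / (d ^ 2 + e ^ 2)) • !![e, d; e, d]) :
    !![1 - d, 0; 0, 1 - e] + !![d, 0; 0, e] * (1 + (ρ - 1) • Matrix.vecMulVec n n) =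
      1 + (ρ - 1) • A₁ := by
  have hn' : n = (√(d ^ 2 + e ^ 2))⁻¹ • ![e, d] := by
    rw [hn]
    ext i
    fin_cases i <;> simp [div_eq_inv_mul]
  rw [hn', Real.vecMulVec_inv_sqrt_smul_self (by positivity), mul_add, mul_one, Matrix.mul_smul,
    Matrix.mul_smul, diag_mul_vecMulVec_swap, ← add_assoc, diag_add_diag_one_sub, hA₁, smul_smul,
    smul_smul, mul_assoc, inv_mul_eq_div, smul_smul]

/-- Case 1 interface triangle: with `n = (e, d)/√(d² + e²)` one has
`diag(1-d, 1-e) + diag(d, e) (I₂ + (ρ-1) n nᵗ) = I₂ + (ρ-1) A₁`, where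
`A₁ = (de/(d²+e²)) [[e, d], [e, d]]`. -/
theorem case_one_interpolation_matrix_identity
    (d e : ℝ) (h : d ^ 2 + e ^ 2 ≠ 0) (ρ : ℝ)
    (n : Fin 2 → ℝ)
    (hn : n = ![e / Real.sqrt (d ^ 2 + e ^ 2), d / Real.sqrt (d ^ 2 + e ^ 2)])
    (A₁ : Matrix (Fin 2) (Fin 2) ℝ)
    (hA₁ : A₁ = (d * e / (d ^ 2 + e ^ 2)) • !![e, d; e, d]) :
    !![1 - d, 0; 0, 1 - e] + !![d, 0; 0, e] * (1 + (ρ - 1) • Matrix.vecMulVec n n) =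
      1 + (ρ - 1) • A₁ :=
  case_one_interpolation_matrix_identity_general d e ρ n hn A₁ hA₁
end

section
/- Let d, e ∈ ℝ with d² + e² ≠ 0 and let A₁ = (de/(d² + e²))·[[e, d], [e, d]]. Then the eigenvalues of the symmetric part (A₁ + A₁ᵗ)/2 are exactly λ₁ = de(d + e − √(2(d² + e²)))/(2(d² + e²)) and λ₂ = de(d + e + √(2(d² + e²)))/(2(d² + e²)). -/
open Matrix

namespace Matrix

variable {K : Type*} [Field K] [NeZero (2 : K)]

-- The quadratic formula for the characteristic polynomial `X² - tr M · X + det M`.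
theorem spectrum_fin_two_of_discr_eq_mul_self {M : Matrix (Fin 2) (Fin 2) K} {s : K}
    (hs : M.discr = s * s) : spectrum K M = {(M.trace - s) / 2, (M.trace + s) / 2} := by
  have hdiscrim : discrim 1 (-M.trace) M.det = s * s := by
    rw [← hs, discr_fin_two, discrim]
    ring
  ext μ
  rw [mem_spectrum_iff_isRoot_charpoly, charpoly_fin_two, Polynomial.IsRoot.def,
    Set.mem_insert_iff, Set.mem_singleton_iff, or_comm]
  simp only [Polynomial.eval_add, Polynomial.eval_sub, Polynomial.eval_mul, Polynomial.eval_pow,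
    Polynomial.eval_X, Polynomial.eval_C]
  convert quadratic_eq_zero_iff one_ne_zero hdiscrim μ using 3 <;> ring

end Matrix

theorem eigenvalues_symmetric_part_A1_general
    (d e : ℝ)
    (A₁ : Matrix (Fin 2) (Fin 2) ℝ)
    (hA₁ : A₁ = (d * e / (d ^ 2 + e ^ 2)) • !![e, d; e, d]) :
    spectrum ℝ ((1 / 2 : ℝ) • (A₁ + A₁ᵀ)) =
      {d * e * (d + e - Real.sqrt (2 * (d ^ 2 + e ^ 2))) / (2 * (d ^ 2 + e ^ 2)),
       d * e * (d + e + Real.sqrt (2 * (d ^ 2 + e ^ 2))) / (2 * (d ^ 2 + e ^ 2))} := by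
  generalize hk : d * e / (d ^ 2 + e ^ 2) = k at hA₁
  have hsymm : (1 / 2 : ℝ) • (A₁ + A₁ᵀ) =
      !![k * e, k * (d + e) / 2; k * (d + e) / 2, k * d] := by
    ext i j
    fin_cases i <;> fin_cases j <;> simp [hA₁] <;> ring
  -- `tr² - 4 det = k² ((d + e)² + (d - e)²) = k² · 2(d² + e²)`
  have hdiscr : (!![k * e, k * (d + e) / 2; k * (d + e) / 2, k * d]).discr =
      (k * Real.sqrt (2 * (d ^ 2 + e ^ 2))) * (k * Real.sqrt (2 * (d ^ 2 + e ^ 2))) := by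
    rw [discr_fin_two, trace_fin_two_of, det_fin_two_of]
    linear_combination (-k ^ 2) * Real.mul_self_sqrt (by positivity : (0 : ℝ) ≤ 2 * (d ^ 2 + e ^ 2))
  rw [hsymm, spectrum_fin_two_of_discr_eq_mul_self hdiscr, trace_fin_two_of, ← hk]
  -- an atom `D` lets `ring` split `(2 * D)⁻¹ = 2⁻¹ * D⁻¹`
  generalize d ^ 2 + e ^ 2 = D
  congr 1
  · ring
  · congr 1
    ring

/-- The eigenvalues of the symmetric part `(A₁ + A₁ᵗ)/2` of
`A₁ = (de/(d²+e²)) [[e, d], [e, d]]` are exactly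
`λ₁ = de(d + e - √(2(d²+e²)))/(2(d²+e²))` and `λ₂ = de(d + e + √(2(d²+e²)))/(2(d²+e²))`. -/
theorem eigenvalues_symmetric_part_A1
    (d e : ℝ) (h : d ^ 2 + e ^ 2 ≠ 0)
    (A₁ : Matrix (Fin 2) (Fin 2) ℝ)
    (hA₁ : A₁ = (d * e / (d ^ 2 + e ^ 2)) • !![e, d; e, d]) :
    spectrum ℝ ((1 / 2 : ℝ) • (A₁ + A₁ᵀ)) =
      {d * e * (d + e - Real.sqrt (2 * (d ^ 2 + e ^ 2))) / (2 * (d ^ 2 + e ^ 2)),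
       d * e * (d + e + Real.sqrt (2 * (d ^ 2 + e ^ 2))) / (2 * (d ^ 2 + e ^ 2))} :=
  eigenvalues_symmetric_part_A1_general d e A₁ hA₁
end

section
/- For all d, e ∈ [0, 1] with d² + e² ≠ 0, one has (5 − 3√3)/8 ≤ de(d + e − √(2(d² + e²)))/(2(d² + e²)) ≤ 0. -/
private lemma upper_aux (d e : ℝ) (hd0 : 0 ≤ d) (he0 : 0 ≤ e)
    (hs : 0 < d ^ 2 + e ^ 2) :
    d * e * (d + e - Real.sqrt (2 * (d ^ 2 + e ^ 2))) / (2 * (d ^ 2 + e ^ 2)) ≤ 0 := by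
  have hle : d + e ≤ Real.sqrt (2 * (d ^ 2 + e ^ 2)) := by
    have h1 : Real.sqrt ((d + e) ^ 2) ≤ Real.sqrt (2 * (d ^ 2 + e ^ 2)) :=
      Real.sqrt_le_sqrt (by nlinarith [sq_nonneg (d - e)])
    rwa [Real.sqrt_sq (add_nonneg hd0 he0)] at h1
  have h2 : 0 ≤ d * e * (Real.sqrt (2 * (d ^ 2 + e ^ 2)) - (d + e)) :=
    mul_nonneg (mul_nonneg hd0 he0) (by linarith)
  have h3 : d * e * (d + e - Real.sqrt (2 * (d ^ 2 + e ^ 2))) ≤ 0 := by nlinarith [h2]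
  exact div_nonpos_of_nonpos_of_nonneg h3 (by positivity)

private lemma lower_aux (x : ℝ) (hx0 : 0 ≤ x) (hx1 : x ≤ 1) :
    (5 - 3 * Real.sqrt 3) / 8 ≤ x * (x + 1 - Real.sqrt (2 * (x ^ 2 + 1))) / (2 * (x ^ 2 + 1)) := by
  have ht : Real.sqrt 3 ^ 2 = 3 := Real.sq_sqrt (by norm_num)
  have ht0 : 0 ≤ Real.sqrt 3 := Real.sqrt_nonneg 3
  have ht53 : (5 : ℝ) / 3 ≤ Real.sqrt 3 := by nlinarith
  have ht2 : Real.sqrt 3 ≤ 2 := by nlinarith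
  have hr0 : 0 ≤ Real.sqrt (2 * (x ^ 2 + 1)) := Real.sqrt_nonneg _
  have hr2 : Real.sqrt (2 * (x ^ 2 + 1)) ^ 2 = 2 * (x ^ 2 + 1) := Real.sq_sqrt (by positivity)
  have hB0 : 0 ≤ x * (x + 1) + (3 * Real.sqrt 3 - 5) / 4 * (x ^ 2 + 1) := by
    nlinarith [mul_nonneg hx0 (by linarith : (0:ℝ) ≤ x + 1)]
  have hQ : 0 ≤ (4 - 2 * Real.sqrt 3) * (1 - x) + 12 * x
      + (4 + 6 * Real.sqrt 3) * (x * (1 - x)) := by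
    nlinarith [mul_nonneg hx0 (sub_nonneg.2 hx1)]
  have h1 : 0 ≤ (x - (2 - Real.sqrt 3)) ^ 2 * ((4 - 2 * Real.sqrt 3) * (1 - x) + 12 * x
      + (4 + 6 * Real.sqrt 3) * (x * (1 - x))) := mul_nonneg (sq_nonneg _) hQ
  have hid : 16 * ((x * (x + 1) + (3 * Real.sqrt 3 - 5) / 4 * (x ^ 2 + 1)) ^ 2
        - 2 * x ^ 2 * (x ^ 2 + 1)) =
      (x - (2 - Real.sqrt 3)) ^ 2 * ((4 - 2 * Real.sqrt 3) * (1 - x) + 12 * x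
          + (4 + 6 * Real.sqrt 3) * (x * (1 - x)))
        + (Real.sqrt 3 ^ 2 - 3) * ((6 * x ^ 2 - 8 * x + 2) * Real.sqrt 3
            + 12 * x ^ 3 - 36 * x ^ 2 + 24 * x - 12 + 9 * (x ^ 2 + 1) ^ 2) := by
    ring
  rw [ht] at hid
  have h2 : (x * Real.sqrt (2 * (x ^ 2 + 1))) ^ 2 ≤
      (x * (x + 1) + (3 * Real.sqrt 3 - 5) / 4 * (x ^ 2 + 1)) ^ 2 := by
    have hxr : (x * Real.sqrt (2 * (x ^ 2 + 1))) ^ 2 = 2 * x ^ 2 * (x ^ 2 + 1) := by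
      rw [mul_pow, hr2]; ring
    rw [hxr]; linarith
  have habs : x * Real.sqrt (2 * (x ^ 2 + 1)) ≤
      x * (x + 1) + (3 * Real.sqrt 3 - 5) / 4 * (x ^ 2 + 1) := by
    calc x * Real.sqrt (2 * (x ^ 2 + 1))
        = Real.sqrt ((x * Real.sqrt (2 * (x ^ 2 + 1))) ^ 2) :=
          (Real.sqrt_sq (by positivity)).symm
      _ ≤ Real.sqrt ((x * (x + 1) + (3 * Real.sqrt 3 - 5) / 4 * (x ^ 2 + 1)) ^ 2) :=
          Real.sqrt_le_sqrt h2
      _ = x * (x + 1) + (3 * Real.sqrt 3 - 5) / 4 * (x ^ 2 + 1) := Real.sqrt_sq hB0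
  rw [div_le_div_iff₀ (by norm_num) (by positivity)]
  nlinarith [habs]

private lemma lower_main (d e : ℝ) (hd0 : 0 ≤ d) (hde : d ≤ e) (he1 : e ≤ 1)
    (h : d ^ 2 + e ^ 2 ≠ 0) :
    (5 - 3 * Real.sqrt 3) / 8 ≤
      d * e * (d + e - Real.sqrt (2 * (d ^ 2 + e ^ 2))) / (2 * (d ^ 2 + e ^ 2)) := by
  have he0 : 0 ≤ e := le_trans hd0 hde
  have hepos : 0 < e := by
    rcases he0.lt_or_eq with h' | h'
    · exact h'
    · exfalso
      have hd' : d = 0 := le_antisymm (h' ▸ hde) hd0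
      exact h (by rw [hd', ← h']; ring)
  set x := d / e with hxdef
  have hx0 : 0 ≤ x := div_nonneg hd0 he0
  have hx1 : x ≤ 1 := (div_le_one hepos).2 hde
  have hdx : d = x * e := by rw [hxdef]; field_simp
  have hsq : Real.sqrt (2 * (d ^ 2 + e ^ 2)) = e * Real.sqrt (2 * (x ^ 2 + 1)) := by
    rw [show 2 * (d ^ 2 + e ^ 2) = e ^ 2 * (2 * (x ^ 2 + 1)) by rw [hdx]; ring,
      Real.sqrt_mul (sq_nonneg e), Real.sqrt_sq he0]
  have hkey : d * e * (d + e - Real.sqrt (2 * (d ^ 2 + e ^ 2))) / (2 * (d ^ 2 + e ^ 2)) =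
      e * (x * (x + 1 - Real.sqrt (2 * (x ^ 2 + 1))) / (2 * (x ^ 2 + 1))) := by
    rw [hsq, hdx]
    have hx21 : (0:ℝ) < x ^ 2 + 1 := by positivity
    field_simp
  rw [hkey]
  have hlow := lower_aux x hx0 hx1
  have hup : x * (x + 1 - Real.sqrt (2 * (x ^ 2 + 1))) / (2 * (x ^ 2 + 1)) ≤ 0 := by
    have h5 := upper_aux x 1 hx0 zero_le_one (by positivity)
    norm_num at h5
    convert h5 using 3 <;> norm_num
  nlinarith [hlow, hup, mul_nonneg (sub_nonneg.2 he1) (neg_nonneg.2 hup)]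

/-- For `d, e ∈ [0,1]` with `d² + e² ≠ 0`, the smaller eigenvalue
`λ₁ = de(d + e - √(d²+e²))/(2(d²+e²))` satisfies `(5 - 3√3)/8 ≤ λ₁ ≤ 0`. -/
theorem lambda_one_bounds
    (d e : ℝ) (hd : d ∈ Set.Icc (0 : ℝ) 1) (he : e ∈ Set.Icc (0 : ℝ) 1)
    (h : d ^ 2 + e ^ 2 ≠ 0) :
    (5 - 3 * Real.sqrt 3) / 8 ≤
        d * e * (d + e - Real.sqrt (2 * (d ^ 2 + e ^ 2))) / (2 * (d ^ 2 + e ^ 2)) ∧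
      d * e * (d + e - Real.sqrt (2 * (d ^ 2 + e ^ 2))) / (2 * (d ^ 2 + e ^ 2)) ≤ 0 := by
  obtain ⟨hd0, hd1⟩ := hd
  obtain ⟨he0, he1⟩ := he
  have hs : 0 < d ^ 2 + e ^ 2 := lt_of_le_of_ne (by positivity) (Ne.symm h)
  refine ⟨?_, upper_aux d e hd0 he0 hs⟩
  rcases le_total d e with hde | hde
  · exact lower_main d e hd0 hde he1 h
  · have hsym : d * e * (d + e - Real.sqrt (2 * (d ^ 2 + e ^ 2))) / (2 * (d ^ 2 + e ^ 2)) =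
        e * d * (e + d - Real.sqrt (2 * (e ^ 2 + d ^ 2))) / (2 * (e ^ 2 + d ^ 2)) := by
      rw [show 2 * (d ^ 2 + e ^ 2) = 2 * (e ^ 2 + d ^ 2) by ring]
      ring
    rw [hsym]
    exact lower_main e d he0 hde hd1 (by rwa [add_comm])
end

section
/- For all d, e ∈ [0, 1] with d² + e² ≠ 0, one has 0 ≤ de(d + e + √(2(d² + e²)))/(2(d² + e²)) ≤ 1. -/
/-- For `d, e ∈ [0,1]` with `d² + e² ≠ 0`, the larger eigenvalue
`λ₂ = de(d + e + √(2(d²+e²)))/(2(d²+e²))` satisfies `0 ≤ λ₂ ≤ 1`. -/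
theorem lambda_two_bounds
    (d e : ℝ) (hd : d ∈ Set.Icc (0 : ℝ) 1) (he : e ∈ Set.Icc (0 : ℝ) 1)
    (h : d ^ 2 + e ^ 2 ≠ 0) :
    0 ≤ d * e * (d + e + Real.sqrt (2 * (d ^ 2 + e ^ 2))) / (2 * (d ^ 2 + e ^ 2)) ∧
      d * e * (d + e + Real.sqrt (2 * (d ^ 2 + e ^ 2))) / (2 * (d ^ 2 + e ^ 2)) ≤ 1 := by
  obtain ⟨hd0, hd1⟩ := hd
  obtain ⟨he0, he1⟩ := he
  have hpos : 0 < d ^ 2 + e ^ 2 := lt_of_le_of_ne (by positivity) (Ne.symm h)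
  set s := Real.sqrt (2 * (d ^ 2 + e ^ 2)) with hs
  have hs0 : 0 ≤ s := Real.sqrt_nonneg _
  have hsq : s ^ 2 = 2 * (d ^ 2 + e ^ 2) := Real.sq_sqrt (by positivity)
  have hde : d + e ≤ s := by
    rw [hs]
    have h1 : (d + e) ^ 2 ≤ 2 * (d ^ 2 + e ^ 2) := by nlinarith [sq_nonneg (d - e)]
    have := Real.sqrt_le_sqrt h1
    rwa [Real.sqrt_sq (by linarith)] at this
  have hs2 : s ≤ 2 := by nlinarith
  constructor
  · apply div_nonneg _ (by positivity)
    have : 0 ≤ d + e + s := by linarith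
    positivity
  · rw [div_le_one (by positivity)]
    nlinarith [sq_nonneg (d - e), mul_nonneg hd0 he0]
end

section
/- Let d, e ∈ [0, 1] with d² + e² ≠ 0, let A₁ = (de/(d² + e²))·[[e, d], [e, d]], and let ρ be a real number with 0 < ρ < 1 + 8/(3√3 − 5). Then for every unit vector u ∈ ℝ² one has u·u + (ρ − 1)·(uᵗ A₁ u) > 0. -/
noncomputable section

open Matrix

set_option maxHeartbeats 1600000

/-- ordered core: for `0 ≤ e ≤ d ≤ 1`, `s = √3`:
`8de(d-e)² ≤ (3s-5)(d²+e²)((3+s)d+(1+s)e)`. -/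
private lemma aux_ordered (d e s : ℝ) (he0 : 0 ≤ e) (hed : e ≤ d) (hd1 : d ≤ 1)
    (hs : s ^ 2 = 3) (hs1 : 1 < s) :
    8 * d * e * (d - e) ^ 2 ≤ (3 * s - 5) * (d ^ 2 + e ^ 2) * ((3 + s) * d + (1 + s) * e) := by
  have hd0 : 0 ≤ d := he0.trans hed
  have hK : 0 < 3 * s - 5 := by nlinarith
  have key : (3 * s - 5) * (d ^ 2 + e ^ 2) * ((3 + s) * d + (1 + s) * e) * d
      - 8 * d * e * (d - e) ^ 2
      = d * (e - (2 - s) * d) ^ 2 * ((4 * s + 6) * d - (4 + 2 * s) * e) := by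
    linear_combination (-4 * d ^ 4 * s + 2 * d ^ 3 * e * s + 13 * d ^ 4 - 9 * d ^ 3 * e
      + 7 * d ^ 2 * e ^ 2 + 3 * d * e ^ 3) * hs
  have h1 : 0 ≤ d * (e - (2 - s) * d) ^ 2 * ((4 * s + 6) * d - (4 + 2 * s) * e) := by
    have : 0 ≤ (4 * s + 6) * d - (4 + 2 * s) * e := by nlinarith
    positivity
  have hL : 0 ≤ (3 + s) * d + (1 + s) * e := by nlinarith
  have h2 : 0 ≤ (3 * s - 5) * (d ^ 2 + e ^ 2) * ((3 + s) * d + (1 + s) * e) * (1 - d) := by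
    have hS : (0:ℝ) ≤ d ^ 2 + e ^ 2 := by positivity
    have h1d : (0:ℝ) ≤ 1 - d := by linarith
    positivity
  nlinarith [key, h1, h2]

/-- core with square root: `4de(w-(d+e)) ≤ (3s-5)(d²+e²)` where `w = √(2(d²+e²))`. -/
private lemma aux_sqrt (d e s w : ℝ) (he0 : 0 ≤ e) (hed : e ≤ d) (hd1 : d ≤ 1)
    (hs : s ^ 2 = 3) (hs1 : 1 < s) (hS : 0 < d ^ 2 + e ^ 2)
    (hw0 : 0 ≤ w) (hw2 : w ^ 2 = 2 * (d ^ 2 + e ^ 2)) :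
    4 * d * e * (w - (d + e)) ≤ (3 * s - 5) * (d ^ 2 + e ^ 2) := by
  have hd0 : 0 ≤ d := he0.trans hed
  have hK : 0 < 3 * s - 5 := by nlinarith
  have hwpos : 0 < w := by
    rcases hw0.lt_or_eq with h' | h'
    · exact h'
    · exfalso; nlinarith
  have hT : 0 < 2 * (s - 1) * (w + (d + e)) := by
    have : 0 < w + (d + e) := by linarith
    have : 0 < s - 1 := by linarith
    positivity
  -- Cauchy–Schwarz: (3-s)(d+e)+(s-1)(d-e) ≤ 2(s-1)w
  have hCS : (3 - s) * (d + e) + (s - 1) * (d - e) ≤ 2 * (s - 1) * w := by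
    nlinarith [sq_nonneg ((3 - s) * (d - e) - (s - 1) * (d + e)), hw2, hwpos,
      sq_nonneg ((3 - s) * (d + e) + (s - 1) * (d - e) - 2 * (s - 1) * w),
      mul_pos (by linarith : (0:ℝ) < s - 1) hwpos]
  have hKS : 0 ≤ (3 * s - 5) * (d ^ 2 + e ^ 2) := by positivity
  have hA := aux_ordered d e s he0 hed hd1 hs hs1
  -- multiply target by the positive quantity T = 2(s-1)(w+(d+e))
  have hmul : 4 * d * e * (w - (d + e)) * (2 * (s - 1) * (w + (d + e)))
      ≤ (3 * s - 5) * (d ^ 2 + e ^ 2) * (2 * (s - 1) * (w + (d + e))) := by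
    have hid : 4 * d * e * (w - (d + e)) * (2 * (s - 1) * (w + (d + e)))
        = (s - 1) * (8 * d * e * (d - e) ^ 2) := by
      linear_combination (8 * d * e * (s - 1)) * hw2
    rw [hid]
    have step1 : (s - 1) * (8 * d * e * (d - e) ^ 2)
        ≤ (s - 1) * ((3 * s - 5) * (d ^ 2 + e ^ 2) * ((3 + s) * d + (1 + s) * e)) :=
      mul_le_mul_of_nonneg_left hA (by linarith)
    have step2 : (s - 1) * ((3 * s - 5) * (d ^ 2 + e ^ 2) * ((3 + s) * d + (1 + s) * e))
        = (3 * s - 5) * (d ^ 2 + e ^ 2) * (2 * s * d + 2 * e) := by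
      linear_combination ((3 * s - 5) * (d ^ 2 + e ^ 2) * (d + e)) * hs
    have step3 := mul_le_mul_of_nonneg_left hCS hKS
    -- (3s-5)S*(2sd+2e) = (3s-5)S*((3-s)(d+e)+(s-1)(d-e)) + (3s-5)S*(2(s-1)(d+e))  [ring]
    nlinarith [step1, step2, step3]
  exact le_of_mul_le_mul_right hmul hT

/-- Positivity of the local Case-1 bilinear form: for `d, e ∈ [0,1]` with `d² + e² ≠ 0`,
`A₁ = (de/(d²+e²)) [[e, d], [e, d]]` and any conductivity ratio
`0 < ρ < 1 + 8/(3√3 - 5)`, every unit vector `u ∈ ℝ²` satisfies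
`u·u + (ρ - 1) uᵗ A₁ u > 0`. -/
theorem case_one_quadratic_form_positive
    (d e : ℝ) (hd : d ∈ Set.Icc (0 : ℝ) 1) (he : e ∈ Set.Icc (0 : ℝ) 1)
    (h : d ^ 2 + e ^ 2 ≠ 0)
    (A₁ : Matrix (Fin 2) (Fin 2) ℝ)
    (hA₁ : A₁ = (d * e / (d ^ 2 + e ^ 2)) • !![e, d; e, d])
    (ρ : ℝ) (hρ₀ : 0 < ρ) (hρ₁ : ρ < 1 + 8 / (3 * Real.sqrt 3 - 5))
    (u : Fin 2 → ℝ) (hu : u 0 ^ 2 + u 1 ^ 2 = 1) :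
    0 < u ⬝ᵥ u + (ρ - 1) * (u ⬝ᵥ (A₁ *ᵥ u)) := by
  obtain ⟨hd0, hd1⟩ := hd
  obtain ⟨he0, he1⟩ := he
  have hS : 0 < d ^ 2 + e ^ 2 := lt_of_le_of_ne (by positivity) (Ne.symm h)
  -- compute the dot products
  have dot1 : u ⬝ᵥ u = 1 := by
    have h1 : u ⬝ᵥ u = u 0 ^ 2 + u 1 ^ 2 := by
      simp [dotProduct, Fin.sum_univ_two]
      ring
    rw [h1, hu]
  have dot2 : u ⬝ᵥ (A₁ *ᵥ u)
      = (d * e / (d ^ 2 + e ^ 2)) * ((u 0 + u 1) * (e * u 0 + d * u 1)) := by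
    rw [hA₁]
    simp [mulVec, dotProduct, Fin.sum_univ_two]
    ring
  set A : ℝ := u 0 with hA
  set B : ℝ := u 1 with hB
  clear_value A B
  rw [dot1, dot2]
  clear dot1 dot2 hA₁ A₁ hA hB u h
  set s : ℝ := Real.sqrt 3 with hsdef
  have hs : s ^ 2 = 3 := Real.sq_sqrt (by norm_num)
  have hs0 : 0 ≤ s := Real.sqrt_nonneg 3
  have hs1 : 1 < s := by nlinarith
  have hK : 0 < 3 * s - 5 := by nlinarith
  set w : ℝ := Real.sqrt (2 * (d ^ 2 + e ^ 2)) with hwdef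
  have hw0 : 0 ≤ w := Real.sqrt_nonneg _
  have hw2 : w ^ 2 = 2 * (d ^ 2 + e ^ 2) := Real.sq_sqrt (by positivity)
  clear_value s w
  have hwle2 : w ≤ 2 := by nlinarith
  -- the square-root core, symmetrized
  have hcore : 4 * d * e * (w - (d + e)) ≤ (3 * s - 5) * (d ^ 2 + e ^ 2) := by
    rcases le_total e d with hed | hde
    · exact aux_sqrt d e s w he0 hed hd1 hs hs1 hS hw0 hw2
    · have := aux_sqrt e d s w hd0 hde he1 hs hs1 (by linarith) hw0 (by linarith [hw2])
      linarith [this]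
  clear hsdef hwdef
  set X : ℝ := (e - d) * (A ^ 2 - B ^ 2) + (d + e) * (2 * A * B) with hX
  clear_value X
  have hid : 2 * ((A + B) * (e * A + d * B)) = (d + e) + X := by
    rw [hX]; linear_combination (d + e) * hu
  have hXY : X ^ 2 + ((e - d) * (2 * A * B) - (d + e) * (A ^ 2 - B ^ 2)) ^ 2 = w ^ 2 := by
    rw [hX]
    linear_combination (2 * (d ^ 2 + e ^ 2) * (A ^ 2 + B ^ 2 + 1)) * hu - hw2
  have hX2 : X ^ 2 ≤ w ^ 2 := by
    nlinarith [sq_nonneg ((e - d) * (2 * A * B) - (d + e) * (A ^ 2 - B ^ 2)), hXY]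
  obtain ⟨hXlow, hXup⟩ := abs_le_of_sq_le_sq' hX2 hw0
  clear hXY hX2 hX
  have hde : 0 ≤ d * e := mul_nonneg hd0 he0
  set Q : ℝ := d * e * ((A + B) * (e * A + d * B)) with hQ
  clear_value Q
  have hQid : 2 * Q = d * e * ((d + e) + X) := by
    rw [hQ]; linear_combination (d * e) * hid
  clear hid
  have hQlow : -((3 * s - 5) * (d ^ 2 + e ^ 2)) ≤ 8 * Q := by
    nlinarith [hcore, mul_nonneg hde (by linarith : (0:ℝ) ≤ X + w), hQid]
  have hsw : d + e ≤ w := by nlinarith [sq_nonneg (d - e)]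
  have hQup : Q ≤ d ^ 2 + e ^ 2 := by
    have t0 : 0 ≤ d * e * (w - X) := mul_nonneg hde (by linarith)
    have t1 : 0 ≤ d * e * (w - (d + e)) := mul_nonneg hde (by linarith)
    have t2 : 0 ≤ (d ^ 2 + e ^ 2 - 2 * (d * e)) * w :=
      mul_nonneg (by nlinarith [sq_nonneg (d - e)]) hw0
    have t3 : 0 ≤ (d ^ 2 + e ^ 2) * (2 - w) := mul_nonneg hS.le (by linarith)
    linarith [hQid, t0, t1, t2, t3]
  -- assemble
  have hρK : (ρ - 1) * (3 * s - 5) < 8 := by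
    have h8 : ρ - 1 < 8 / (3 * s - 5) := by linarith
    calc (ρ - 1) * (3 * s - 5) < (8 / (3 * s - 5)) * (3 * s - 5) :=
          mul_lt_mul_of_pos_right h8 hK
      _ = 8 := by field_simp
  have hmain : 0 < (d ^ 2 + e ^ 2) + (ρ - 1) * Q := by
    rcases le_total ρ 1 with hρ | hρ
    · nlinarith [mul_nonneg (by linarith : (0:ℝ) ≤ 1 - ρ)
        (by linarith [hQup] : (0:ℝ) ≤ d ^ 2 + e ^ 2 - Q), mul_pos hρ₀ hS]
    · nlinarith [mul_nonneg (by linarith : (0:ℝ) ≤ ρ - 1)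
        (by linarith [hQlow] : (0:ℝ) ≤ 8 * Q + (3 * s - 5) * (d ^ 2 + e ^ 2)),
        mul_pos hS (by linarith : (0:ℝ) < 8 - (ρ - 1) * (3 * s - 5))]
  have hgoal : 1 + (ρ - 1) * ((d * e / (d ^ 2 + e ^ 2)) * ((A + B) * (e * A + d * B)))
      = ((d ^ 2 + e ^ 2) + (ρ - 1) * Q) / (d ^ 2 + e ^ 2) := by
    rw [hQ]
    field_simp
  rw [hgoal]
  exact div_pos hmain hS
end
end

section
/- Let d, e ∈ [0, 1] with d² + e² ≠ 0 and let A₂ = (1/(d² + e²))·[[(1 − d)e², (1 − d)de], [(1 − e)de, (1 − e)d²]]. Then for every unit vector u ∈ ℝ², the quadratic form of the symmetric part satisfies (5 − 3√3)/8 ≤ uᵗ((A₂ + A₂ᵗ)/2)u ≤ 1; equivalently, both eigenvalues of (A₂ + A₂ᵗ)/2 lie in the interval [(5 − 3√3)/8, 1]. -/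
noncomputable section

open Matrix

set_option maxHeartbeats 1000000

private lemma quad_form_nonneg (a b c x y : ℝ) (ha : 0 ≤ a) (hc : 0 ≤ c)
    (hdet : b ^ 2 ≤ a * c) : 0 ≤ a * x ^ 2 + 2 * b * x * y + c * y ^ 2 := by
  rcases eq_or_lt_of_le ha with h0 | hpos
  · have hb : b = 0 := by nlinarith [sq_nonneg b]
    rw [← h0, hb]
    nlinarith [mul_nonneg hc (sq_nonneg y)]
  · nlinarith [sq_nonneg (a * x + b * y), mul_nonneg (sub_nonneg.2 hdet) (sq_nonneg y)]

private lemma det_upper (d e : ℝ) (hd0 : 0 ≤ d) (hd1 : d ≤ 1) (he0 : 0 ≤ e) (he1 : e ≤ 1) :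
    (d * e * (2 - d - e)) ^ 2 ≤ 4 * (d * (d + e ^ 2)) * (e * (e + d ^ 2)) := by
  have h1 : 0 ≤ ((d * e) * (d * e)) * ((d + e) * (4 - d - e)) :=
    mul_nonneg (mul_nonneg (mul_nonneg hd0 he0) (mul_nonneg hd0 he0))
      (mul_nonneg (add_nonneg hd0 he0) (by linarith))
  have h2 : 0 ≤ (d * e) * (d ^ 3 + e ^ 3 + d ^ 2 * e ^ 2) := by positivity
  nlinarith [h1, h2]

private lemma det_lower_half (d e r : ℝ) (he0 : 0 ≤ e) (hed : e ≤ d) (hd1 : d ≤ 1)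
    (hr : r ^ 2 = 3) (hr5 : 5 / 3 ≤ r) (hr7 : r ≤ 7 / 4) :
    16 * (d * e * (2 - d - e)) ^ 2 ≤
      (8 * (1 - d) * e ^ 2 + (3 * r - 5) * (d ^ 2 + e ^ 2)) *
        (8 * (1 - e) * d ^ 2 + (3 * r - 5) * (d ^ 2 + e ^ 2)) := by
  have hd0 : 0 ≤ d := le_trans he0 hed
  have he1 : e ≤ 1 := le_trans hed hd1
  have hB1 : 0 ≤ 2*e^2+2*d*e^2+4*d^2-14*d^2*e^2+4*d^3+32*d^3*e-14*d^3*e^2 := by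
    nlinarith [mul_nonneg (mul_nonneg (mul_nonneg hd0 hd0) he0) (sub_nonneg.2 hed), mul_nonneg (mul_nonneg (mul_nonneg (mul_nonneg hd0 hd0) hd0) he0) (sub_nonneg.2 hed), mul_nonneg (mul_nonneg (mul_nonneg (mul_nonneg hd0 hd0) he0) he0) (sub_nonneg.2 hd1), mul_nonneg (mul_nonneg (mul_nonneg (mul_nonneg (mul_nonneg hd0 hd0) hd0) he0) he0) (sub_nonneg.2 hd1), sq_nonneg (d*e), mul_nonneg he0 hd0]
  have hB2 : 0 ≤ 6*e^2-2*d*e^2+12*d^2-8*d^2*e-66*d^2*e^2+4*d^3+120*d^3*e-66*d^3*e^2 := by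
    nlinarith [mul_nonneg (mul_nonneg (mul_nonneg hd0 hd0) he0) (sub_nonneg.2 hed), mul_nonneg (mul_nonneg (mul_nonneg (mul_nonneg hd0 hd0) hd0) he0) (sub_nonneg.2 hed), mul_nonneg (mul_nonneg (mul_nonneg (mul_nonneg hd0 hd0) he0) he0) (sub_nonneg.2 hd1), mul_nonneg (mul_nonneg (mul_nonneg (mul_nonneg (mul_nonneg hd0 hd0) hd0) he0) he0) (sub_nonneg.2 hd1), mul_nonneg (mul_nonneg (mul_nonneg hd0 hd0) he0) (sub_nonneg.2 he1), mul_nonneg (mul_nonneg (mul_nonneg (mul_nonneg hd0 hd0) hd0) he0) (sub_nonneg.2 he1), mul_nonneg (mul_nonneg he0 he0) (sub_nonneg.2 hed), mul_nonneg (mul_nonneg (mul_nonneg he0 he0) hd0) (sub_nonneg.2 hed)]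
  have hB : 0 ≤ (12-6*r)*e^2 + (52-30*r)*d*e^2 + (24-12*r)*d^2 + (40-24*r)*d^2*e
      + (36-30*r)*d^2*e^2 + (64-36*r)*d^3 + (72-24*r)*d^3*e + (36-30*r)*d^3*e^2 := by
    nlinarith [mul_nonneg (by linarith : (0:ℝ) ≤ 21-12*r) hB1, mul_nonneg (by linarith : (0:ℝ) ≤ 12*r-20) hB2]
  have hQ : 0 ≤ (12-10*r)*e^2+4*e+(12-6*r) := by
    nlinarith [mul_nonneg he0 (sub_nonneg.2 he1), sq_nonneg e]
  have h1 : 0 ≤ (1-d)*e^2*((12-6*r)*e^2 + (52-30*r)*d*e^2 + (24-12*r)*d^2 + (40-24*r)*d^2*e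
      + (36-30*r)*d^2*e^2 + (64-36*r)*d^3 + (72-24*r)*d^3*e + (36-30*r)*d^3*e^2) :=
    mul_nonneg (mul_nonneg (sub_nonneg.2 hd1) (sq_nonneg e)) hB
  have h2 : 0 ≤ (r*e-1)^2*((12-10*r)*e^2+4*e+(12-6*r))*d^4 :=
    mul_nonneg (mul_nonneg (sq_nonneg _) hQ) (by positivity)
  have key : (8*(1-d)*e^2+(3*r-5)*(d^2+e^2))*(8*(1-e)*d^2+(3*r-5)*(d^2+e^2)) - 16*(d*e*(2-d-e))^2
      = (1-d)*e^2*((12-6*r)*e^2 + (52-30*r)*d*e^2 + (24-12*r)*d^2 + (40-24*r)*d^2*e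
      + (36-30*r)*d^2*e^2 + (64-36*r)*d^3 + (72-24*r)*d^3*e + (36-30*r)*d^3*e^2)
      + (r*e-1)^2*((12-10*r)*e^2+4*e+(12-6*r))*d^4 := by
    linear_combination (9*e^4 + 18*d^2*e^2 + 9*d^4 - 12*d^4*e - 12*d^4*e^2 + 6*d^4*e^2*r
      - 24*d^4*e^3 - 12*d^4*e^4 + 10*d^4*e^4*r) * hr
  linarith [h1, h2]

private lemma det_lower (d e r : ℝ) (hd0 : 0 ≤ d) (hd1 : d ≤ 1) (he0 : 0 ≤ e) (he1 : e ≤ 1)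
    (hr : r ^ 2 = 3) (hr5 : 5 / 3 ≤ r) (hr7 : r ≤ 7 / 4) :
    16 * (d * e * (2 - d - e)) ^ 2 ≤
      (8 * (1 - d) * e ^ 2 + (3 * r - 5) * (d ^ 2 + e ^ 2)) *
        (8 * (1 - e) * d ^ 2 + (3 * r - 5) * (d ^ 2 + e ^ 2)) := by
  rcases le_total e d with hed | hde
  · exact det_lower_half d e r he0 hed hd1 hr hr5 hr7
  · have := det_lower_half e d r hd0 hde he1 hr hr5 hr7
    nlinarith [this]

/-- For `d, e ∈ [0,1]` with `d² + e² ≠ 0` and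
`A₂ = (1/(d²+e²)) [[(1-d)e², (1-d)de], [(1-e)de, (1-e)d²]]`, the quadratic form of the
symmetric part `(A₂ + A₂ᵗ)/2` at any unit vector lies in `[(5 - 3√3)/8, 1]`
(equivalently, both eigenvalues of `(A₂ + A₂ᵗ)/2` lie in this interval). -/
theorem case_one_A2_symmetric_part_bounds
    (d e : ℝ) (hd : d ∈ Set.Icc (0 : ℝ) 1) (he : e ∈ Set.Icc (0 : ℝ) 1)
    (h : d ^ 2 + e ^ 2 ≠ 0)
    (A₂ : Matrix (Fin 2) (Fin 2) ℝ)
    (hA₂ : A₂ = (1 / (d ^ 2 + e ^ 2)) •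
      !![(1 - d) * e ^ 2, (1 - d) * d * e; (1 - e) * d * e, (1 - e) * d ^ 2])
    (u : Fin 2 → ℝ) (hu : u 0 ^ 2 + u 1 ^ 2 = 1) :
    (5 - 3 * Real.sqrt 3) / 8 ≤ u ⬝ᵥ (((1 / 2 : ℝ) • (A₂ + A₂ᵀ)) *ᵥ u) ∧
      u ⬝ᵥ (((1 / 2 : ℝ) • (A₂ + A₂ᵀ)) *ᵥ u) ≤ 1 := by
  obtain ⟨hd0, hd1⟩ := hd
  obtain ⟨he0, he1⟩ := he
  set r := Real.sqrt 3 with hrdef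
  have hr : r ^ 2 = 3 := Real.sq_sqrt (by norm_num)
  have hr0 : 0 ≤ r := Real.sqrt_nonneg 3
  have hr5 : 5 / 3 ≤ r := by nlinarith
  have hr7 : r ≤ 7 / 4 := by nlinarith
  have hD : 0 < d ^ 2 + e ^ 2 := lt_of_le_of_ne (by positivity) (Ne.symm h)
  set X := u 0 with hX
  set Y := u 1 with hY
  have hV : u ⬝ᵥ (((1 / 2 : ℝ) • (A₂ + A₂ᵀ)) *ᵥ u)
      = ((1 - d) * e ^ 2 * X ^ 2 + (2 - d - e) * (d * e) * (X * Y) + (1 - e) * d ^ 2 * Y ^ 2)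
        / (d ^ 2 + e ^ 2) := by
    subst hA₂
    simp only [dotProduct, Matrix.mulVec, Fin.sum_univ_two, Matrix.smul_apply,
      Matrix.add_apply, Matrix.transpose_apply, Matrix.smul_apply, smul_eq_mul,
      Matrix.cons_val', Matrix.cons_val_zero, Matrix.cons_val_one, Matrix.head_cons,
      Matrix.empty_val', Matrix.cons_val_fin_one, Matrix.head_fin_const, Matrix.of_apply]
    field_simp
    ring
  rw [hV]
  constructor
  · rw [le_div_iff₀ hD]
    have hdet : ((2 - d - e) * (d * e) / 2) ^ 2 ≤
        ((1 - d) * e ^ 2 + (3 * r - 5) / 8 * (d ^ 2 + e ^ 2)) *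
          ((1 - e) * d ^ 2 + (3 * r - 5) / 8 * (d ^ 2 + e ^ 2)) := by
      nlinarith [det_lower d e r hd0 hd1 he0 he1 hr hr5 hr7]
    have ha : 0 ≤ (1 - d) * e ^ 2 + (3 * r - 5) / 8 * (d ^ 2 + e ^ 2) := by
      have : 0 ≤ (1 - d) * e ^ 2 := mul_nonneg (by linarith) (sq_nonneg e)
      nlinarith [hD.le]
    have hc : 0 ≤ (1 - e) * d ^ 2 + (3 * r - 5) / 8 * (d ^ 2 + e ^ 2) := by
      have : 0 ≤ (1 - e) * d ^ 2 := mul_nonneg (by linarith) (sq_nonneg d)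
      nlinarith [hD.le]
    have hq := quad_form_nonneg _ _ _ X Y ha hc hdet
    have hu' : (3 * r - 5) / 8 * (d ^ 2 + e ^ 2) * (X ^ 2 + Y ^ 2)
        = (3 * r - 5) / 8 * (d ^ 2 + e ^ 2) := by rw [hu]; ring
    linarith [hq, hu']
  · rw [div_le_one hD]
    have hdet : (-((2 - d - e) * (d * e) / 2)) ^ 2 ≤
        ((d ^ 2 + e ^ 2) - (1 - d) * e ^ 2) * ((d ^ 2 + e ^ 2) - (1 - e) * d ^ 2) := by
      linarith [det_upper d e hd0 hd1 he0 he1]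
    have ha : 0 ≤ (d ^ 2 + e ^ 2) - (1 - d) * e ^ 2 := by
      nlinarith [mul_nonneg hd0 (sq_nonneg e)]
    have hc : 0 ≤ (d ^ 2 + e ^ 2) - (1 - e) * d ^ 2 := by
      nlinarith [mul_nonneg he0 (sq_nonneg d)]
    have hq := quad_form_nonneg _ _ _ X Y ha hc hdet
    have hu' : (d ^ 2 + e ^ 2) * (X ^ 2 + Y ^ 2) = (d ^ 2 + e ^ 2) := by rw [hu]; ring
    linarith [hq, hu']
end
end

section
/- Let d, e ∈ ℝ with (d − e)² + e² ≠ 0, set n = (e, d − e)/√((d − e)² + e²) ∈ ℝ², and let ρ ∈ ℝ. Then [[1 − d, 0], [d − e, 1 − e]] + [[d, 0], [e − d, e]]·(I₂ + (ρ − 1)·n nᵗ) = I₂ + (ρ − 1)·B₁, where B₁ = (1/((d − e)² + e²))·[[de², de(d − e)], [0, 0]]. -/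
/-!
The two interpolation matrices sum to `I₂`, so the left side is `I₂ + (ρ - 1) A n nᵗ` with
`A = [[d, 0], [e - d, e]]`, and `A n nᵗ = (A n) nᵗ`. The second row of `A` is orthogonal to
`(e, d - e)`, so `A (e, d - e) = (de, 0)`, which produces the zero row of `B₁`.
-/

open Matrix

theorem vecMulVec_smul_self {R m : Type*} [CommSemiring R] (c : R) (v : m → R) :
    vecMulVec (c • v) (c • v) = c ^ 2 • vecMulVec v v := by
  rw [smul_vecMulVec, vecMulVec_smul, smul_smul, sq]

theorem vec2_div_eq_inv_smul {K : Type*} [Field K] (a b r : K) :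
    ![a / r, b / r] = r⁻¹ • ![a, b] := by
  ext i; fin_cases i <;> simp [div_eq_inv_mul]

theorem caseTwo_interpolation_add_eq_one (d e : ℝ) :
    !![1 - d, 0; d - e, 1 - e] + !![d, 0; e - d, e] = 1 := by
  ext i j; fin_cases i <;> fin_cases j <;> simp

theorem caseTwo_mulVec_normal (d e : ℝ) :
    !![d, 0; e - d, e] *ᵥ ![e, d - e] = ![d * e, 0] := by
  ext i; fin_cases i <;> simp <;> ring

theorem vecMulVec_caseTwo (d e : ℝ) :
    vecMulVec ![d * e, 0] ![e, d - e] = !![d * e ^ 2, d * e * (d - e); 0, 0] := by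
  ext i j; fin_cases i <;> fin_cases j <;> simp [vecMulVec_apply]; ring

theorem case_two_interpolation_matrix_identity_general
    (d e : ℝ) (ρ : ℝ)
    (n : Fin 2 → ℝ)
    (hn : n = ![e / Real.sqrt ((d - e) ^ 2 + e ^ 2),
                (d - e) / Real.sqrt ((d - e) ^ 2 + e ^ 2)])
    (B₁ : Matrix (Fin 2) (Fin 2) ℝ)
    (hB₁ : B₁ = (1 / ((d - e) ^ 2 + e ^ 2)) • !![d * e ^ 2, d * e * (d - e); 0, 0]) :
    !![1 - d, 0; d - e, 1 - e] + !![d, 0; e - d, e] * (1 + (ρ - 1) • Matrix.vecMulVec n n) =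
      1 + (ρ - 1) • B₁ := by
  have hnn : vecMulVec n n =
      (1 / ((d - e) ^ 2 + e ^ 2)) • vecMulVec ![e, d - e] ![e, d - e] := by
    rw [hn, vec2_div_eq_inv_smul, vecMulVec_smul_self, inv_pow, Real.sq_sqrt (by positivity),
      one_div]
  rw [mul_add, mul_one, ← add_assoc, caseTwo_interpolation_add_eq_one, mul_smul_comm, hnn,
    mul_smul_comm, mul_vecMulVec, caseTwo_mulVec_normal, vecMulVec_caseTwo, hB₁]

/-- Case 2 interface triangle: with `n = (e, d - e)/√((d-e)² + e²)` one has
`[[1-d, 0], [d-e, 1-e]] + [[d, 0], [e-d, e]] (I₂ + (ρ-1) n nᵗ) = I₂ + (ρ-1) B₁`, where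
`B₁ = (1/((d-e)² + e²)) [[de², de(d-e)], [0, 0]]`. -/
theorem case_two_interpolation_matrix_identity
    (d e : ℝ) (h : (d - e) ^ 2 + e ^ 2 ≠ 0) (ρ : ℝ)
    (n : Fin 2 → ℝ)
    (hn : n = ![e / Real.sqrt ((d - e) ^ 2 + e ^ 2),
                (d - e) / Real.sqrt ((d - e) ^ 2 + e ^ 2)])
    (B₁ : Matrix (Fin 2) (Fin 2) ℝ)
    (hB₁ : B₁ = (1 / ((d - e) ^ 2 + e ^ 2)) • !![d * e ^ 2, d * e * (d - e); 0, 0]) :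
    !![1 - d, 0; d - e, 1 - e] + !![d, 0; e - d, e] * (1 + (ρ - 1) • Matrix.vecMulVec n n) =
      1 + (ρ - 1) • B₁ :=
  case_two_interpolation_matrix_identity_general d e ρ n hn B₁ hB₁
end

section
/- Let d, e ∈ (0, 1] and define α₁ = de²/((d − e)² + e²) and α₂ = de(d − e)/((d − e)² + e²). Then α₁ ∈ [0, 1], α₂ ∈ [(1 − √2)/2, 1/2], and α₁² + α₂² ≤ 1. -/
/-!
Write `Q = (d - e)² + e²`. Each bound is an inequality `t * X ≤ Y` with `t ∈ {d, e} ⊆ [0, 1]`,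
`Y ≥ 0` and `X ≤ Y` an elementary quadratic inequality: `e² ≤ Q`, `2e(d - e) ≤ Q` (AM-GM) and
`2d(e - d) ≤ (√2 - 1) Q`, which is a perfect square. Finally `α₁² + α₂² = d²e² / Q ≤ e² / Q ≤ 1`.
-/

lemma mul_le_of_le_of_nonneg_of_le_one {R : Type*} [Semiring R] [PartialOrder R]
    [IsOrderedRing R] {t x y : R} (ht₀ : 0 ≤ t) (ht₁ : t ≤ 1) (hxy : x ≤ y) (hy : 0 ≤ y) :
    t * x ≤ y :=
  (mul_le_mul_of_nonneg_left hxy ht₀).trans (mul_le_of_le_one_left hy ht₁)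

lemma two_mul_mul_sub_le_sqrt_two_sub_one_mul (d e : ℝ) :
    2 * d * (e - d) ≤ (√2 - 1) * ((d - e) ^ 2 + e ^ 2) := by
  have hsq : √2 ^ 2 = 2 := Real.sq_sqrt zero_le_two
  have hsquare : (√2 - 1) * ((d - e) ^ 2 + e ^ 2) - 2 * d * (e - d)
      = (√2 + 1) * (e - d - (√2 - 1) * e) ^ 2 := by
    linear_combination (2 * (e - d) * e - (√2 - 1) * e ^ 2) * hsq
  rw [← sub_nonneg, hsquare]
  positivity

lemma sq_mul_sq_add_sq_mul_mul_sub (d e : ℝ) :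
    (d * e ^ 2) ^ 2 + (d * e * (d - e)) ^ 2 = (d * e) ^ 2 * ((d - e) ^ 2 + e ^ 2) := by
  ring

/-- For `d, e ∈ (0, 1]`, the quantities `α₁ = de²/((d-e)² + e²)` and
`α₂ = de(d-e)/((d-e)² + e²)` satisfy `α₁ ∈ [0, 1]`, `α₂ ∈ [(1-√2)/2, 1/2]` and
`α₁² + α₂² ≤ 1`. -/
theorem case_two_alpha_bounds
    (d e : ℝ) (hd : d ∈ Set.Ioc (0 : ℝ) 1) (he : e ∈ Set.Ioc (0 : ℝ) 1)
    (α₁ α₂ : ℝ)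
    (hα₁ : α₁ = d * e ^ 2 / ((d - e) ^ 2 + e ^ 2))
    (hα₂ : α₂ = d * e * (d - e) / ((d - e) ^ 2 + e ^ 2)) :
    α₁ ∈ Set.Icc (0 : ℝ) 1 ∧
      α₂ ∈ Set.Icc ((1 - Real.sqrt 2) / 2) (1 / 2 : ℝ) ∧
      α₁ ^ 2 + α₂ ^ 2 ≤ 1 := by
  obtain ⟨hd₀, hd₁⟩ := hd
  obtain ⟨he₀, he₁⟩ := he
  set Q := (d - e) ^ 2 + e ^ 2
  have hQ : 0 < Q := by positivity
  have he_sq : e ^ 2 ≤ Q := le_add_of_nonneg_left (sq_nonneg _)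
  have hsqrt : 1 ≤ √2 := Real.one_le_sqrt.mpr one_le_two
  refine ⟨⟨hα₁ ▸ by positivity, ?_⟩, ⟨?_, ?_⟩, ?_⟩
  · rw [hα₁, div_le_one hQ]
    exact mul_le_of_le_of_nonneg_of_le_one hd₀.le hd₁ he_sq hQ.le
  · rw [hα₂, div_le_div_iff₀ two_pos hQ]
    have hlower := mul_le_of_le_of_nonneg_of_le_one he₀.le he₁
      (two_mul_mul_sub_le_sqrt_two_sub_one_mul d e) (mul_nonneg (sub_nonneg.2 hsqrt) hQ.le)
    linarith
  · rw [hα₂, div_le_div_iff₀ hQ two_pos]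
    have hupper := mul_le_of_le_of_nonneg_of_le_one hd₀.le hd₁ (two_mul_le_add_sq (d - e) e) hQ.le
    linarith
  · rw [hα₁, hα₂, div_pow, div_pow, ← add_div, sq_mul_sq_add_sq_mul_mul_sub, sq Q,
      mul_div_mul_right _ _ hQ.ne', div_le_one hQ, mul_pow]
    exact mul_le_of_le_of_nonneg_of_le_one (sq_nonneg d) (pow_le_one₀ hd₀.le hd₁) he_sq hQ.le
end

section
/- Let d, e ∈ (0, 1], let α₁ = de²/((d − e)² + e²) and α₂ = de(d − e)/((d − e)² + e²), and let a, b ∈ ℝ with a² + b² = 1 and a ≥ 0. If a²α₁ + abα₂ < 0, then −(1 + b²)/(a²α₁ + abα₂) ≥ 8 + 4√2; equivalently, (1 + b²) + (8 + 4√2)·(a²α₁ + abα₂) ≥ 0. -/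
/-- Sharp bound in the Case-2 inf-sup analysis: for `d, e ∈ (0, 1]`,
`α₁ = de²/((d-e)² + e²)`, `α₂ = de(d-e)/((d-e)² + e²)` and a unit vector `(a, b)` with
`a ≥ 0`, if `a²α₁ + abα₂ < 0` then `-(1 + b²)/(a²α₁ + abα₂) ≥ 8 + 4√2`. -/
theorem case_two_sharp_negative_bound
    (d e : ℝ) (hd : d ∈ Set.Ioc (0 : ℝ) 1) (he : e ∈ Set.Ioc (0 : ℝ) 1)
    (α₁ α₂ : ℝ)
    (hα₁ : α₁ = d * e ^ 2 / ((d - e) ^ 2 + e ^ 2))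
    (hα₂ : α₂ = d * e * (d - e) / ((d - e) ^ 2 + e ^ 2))
    (a b : ℝ) (hab : a ^ 2 + b ^ 2 = 1) (ha : 0 ≤ a)
    (hneg : a ^ 2 * α₁ + a * b * α₂ < 0) :
    8 + 4 * Real.sqrt 2 ≤ -(1 + b ^ 2) / (a ^ 2 * α₁ + a * b * α₂) := by
  obtain ⟨hd0, hd1⟩ := hd
  obtain ⟨he0, he1⟩ := he
  set s := Real.sqrt 2 with hs
  have hs2 : s ^ 2 = 2 := Real.sq_sqrt (by norm_num)
  have hs0 : (1 : ℝ) ≤ s := by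
    nlinarith [Real.sqrt_nonneg 2]
  have hD : (0 : ℝ) < (d - e) ^ 2 + e ^ 2 := by positivity
  have hQ : a ^ 2 * α₁ + a * b * α₂
      = (d * e ^ 2 * a ^ 2 + d * e * (d - e) * (a * b)) / ((d - e) ^ 2 + e ^ 2) := by
    rw [hα₁, hα₂]; ring
  -- the numerator is negative
  have hN : d * e ^ 2 * a ^ 2 + d * e * (d - e) * (a * b) < 0 := by
    by_contra h
    push_neg at h
    have := div_nonneg h hD.le
    rw [← hQ] at this
    linarith
  have hN' : a ^ 2 * e ^ 2 + a * b * ((d - e) * e) < 0 := by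
    by_contra h
    push_neg at h
    nlinarith [mul_nonneg hd0.le h]
  -- core sum-of-squares identity
  have key : 4 * (1 + b ^ 2) *
      ((1 + b ^ 2) * ((d - e) ^ 2 + e ^ 2)
        + (8 + 4 * s) * (a ^ 2 * e ^ 2 + a * b * ((d - e) * e)))
      = (2 * (1 + b ^ 2) * (d - e) + (8 + 4 * s) * (a * b) * e) ^ 2
        + ((6 + 4 * s) * (b ^ 2 + 5 - 4 * s) * e) ^ 2 := by
    linear_combination
      (432 * e ^ 2 - 128 * e ^ 2 * s - 256 * e ^ 2 * s ^ 2 + 224 * b ^ 2 * e ^ 2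
        + 128 * b ^ 2 * e ^ 2 * s - 16 * b ^ 4 * e ^ 2 - 16 * a ^ 2 * b ^ 2 * e ^ 2) * hs2
      + (32 * e ^ 2 + 16 * e ^ 2 * s - 64 * b ^ 2 * e ^ 2 - 48 * b ^ 2 * e ^ 2 * s) * hab
  have hR : 0 ≤ (1 + b ^ 2) * ((d - e) ^ 2 + e ^ 2)
      + (8 + 4 * s) * (a ^ 2 * e ^ 2 + a * b * ((d - e) * e)) := by
    nlinarith [sq_nonneg (2 * (1 + b ^ 2) * (d - e) + (8 + 4 * s) * (a * b) * e),
      sq_nonneg ((6 + 4 * s) * (b ^ 2 + 5 - 4 * s) * e), sq_nonneg b, key]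
  -- use d ≤ 1 to bound the full numerator expression
  have hP : 0 ≤ (1 + b ^ 2) * ((d - e) ^ 2 + e ^ 2)
      + (8 + 4 * s) * (d * e ^ 2 * a ^ 2 + d * e * (d - e) * (a * b)) := by
    have h1 : 0 ≤ (8 + 4 * s) * ((1 - d) * (-(a ^ 2 * e ^ 2 + a * b * ((d - e) * e)))) := by
      apply mul_nonneg (by linarith)
      exact mul_nonneg (by linarith) (by linarith)
    nlinarith [h1, hR]
  -- conclude
  have hQneg : a ^ 2 * α₁ + a * b * α₂ < 0 := hneg
  rw [le_div_iff_of_neg hQneg, hQ]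
  rw [← mul_div_assoc, le_div_iff₀ hD]
  linarith [hP]
end

section
/- Let d, e ∈ (0, 1], let α₁ = de²/((d − e)² + e²) and α₂ = de(d − e)/((d − e)² + e²), let a, b ∈ ℝ with a² + b² = 1 and a ≥ 0, and let ρ be a real number with 0 < ρ < 9 + 4√2. Then 1 + b² + (ρ − 1)·(a²α₁ + abα₂) > 0. -/
/-!
The coefficient vector `(α₁, α₂)` satisfies `α₁² + α₂² = d α₁`, so for `d ≤ 1` it lies in the
closed disc of radius `1/2` about `(1/2, 0)`. By Cauchy–Schwarz, for a unit vector `(a, b)` this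
pins `a α₁ + b α₂` to within `1/2` of `a / 2`; hence `Q = a² α₁ + a b α₂` lies between
`-a(1 - a)/2` and `1`. The case `ρ ≤ 1` then follows from `Q ≤ 1`, and the case `ρ > 1` from
`(4 + 2√2) a (1 - a) ≤ 2 - a² = 1 + b²`, which is where the threshold `9 + 4√2` comes from.
-/

theorem sq_add_sq_edge_ratios (d e : ℝ) :
    (d * e ^ 2 / ((d - e) ^ 2 + e ^ 2)) ^ 2 + (d * e * (d - e) / ((d - e) ^ 2 + e ^ 2)) ^ 2
      = d * (d * e ^ 2 / ((d - e) ^ 2 + e ^ 2)) := by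
  rcases eq_or_ne ((d - e) ^ 2 + e ^ 2) 0 with hS | hS
  · simp [hS]
  · field_simp
    ring

theorem edge_ratios_sq_add_sq_le {d : ℝ} (hd₀ : 0 ≤ d) (hd₁ : d ≤ 1) (e : ℝ) :
    (d * e ^ 2 / ((d - e) ^ 2 + e ^ 2)) ^ 2 + (d * e * (d - e) / ((d - e) ^ 2 + e ^ 2)) ^ 2
      ≤ d * e ^ 2 / ((d - e) ^ 2 + e ^ 2) := by
  rw [sq_add_sq_edge_ratios]
  exact mul_le_of_le_one_left (by positivity) hd₁

theorem abs_mul_add_mul_sub_half_le {α₁ α₂ a b : ℝ} (hα : α₁ ^ 2 + α₂ ^ 2 ≤ α₁)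
    (hab : a ^ 2 + b ^ 2 = 1) : |a * α₁ + b * α₂ - a / 2| ≤ 1 / 2 := by
  apply abs_le_of_sq_le_sq _ (by norm_num)
  -- Lagrange's identity for `(a, b)` and `(α₁ - 1/2, α₂)`
  nlinarith [sq_nonneg (a * α₂ - b * (α₁ - 1 / 2))]

theorem mul_mul_one_sub_le_two_sub_sq (a : ℝ) :
    (4 + 2 * √2) * (a * (1 - a)) ≤ 2 - a ^ 2 := by
  have hsq : 2 - a ^ 2 - (4 + 2 * √2) * (a * (1 - a)) = (3 + 2 * √2) * (a - (2 - √2)) ^ 2 := by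
    linear_combination (5 - 4 * a - 2 * √2) * Real.sq_sqrt (show (0 : ℝ) ≤ 2 by norm_num)
  nlinarith [mul_nonneg (by positivity : (0 : ℝ) ≤ 3 + 2 * √2) (sq_nonneg (a - (2 - √2)))]

theorem one_add_sq_add_mul_quadratic_pos {α₁ α₂ a b ρ : ℝ} (hα : α₁ ^ 2 + α₂ ^ 2 ≤ α₁)
    (hab : a ^ 2 + b ^ 2 = 1) (ha : 0 ≤ a) (hρ₀ : 0 < ρ) (hρ₁ : ρ < 9 + 4 * √2) :
    0 < 1 + b ^ 2 + (ρ - 1) * (a ^ 2 * α₁ + a * b * α₂) := by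
  have ha₁ : a ≤ 1 := by nlinarith [sq_nonneg b]
  have hQ : a ^ 2 * α₁ + a * b * α₂ = a * (a * α₁ + b * α₂) := by ring
  obtain ⟨hlow, hupp⟩ := abs_le.mp (abs_mul_add_mul_sub_half_le hα hab)
  rcases le_or_gt ρ 1 with hρ | hρ
  · have hQ_le : a ^ 2 * α₁ + a * b * α₂ ≤ 1 := by
      rw [hQ]
      nlinarith [mul_le_mul_of_nonneg_left hupp ha]
    nlinarith [mul_le_mul_of_nonneg_left hQ_le (sub_nonneg.mpr hρ), sq_nonneg b]
  · rcases le_or_gt 0 (a ^ 2 * α₁ + a * b * α₂) with hQ_nonneg | hQ_neg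
    · nlinarith [mul_nonneg (sub_nonneg.mpr hρ.le) hQ_nonneg, sq_nonneg b]
    · have hQ_ge : -(a * (1 - a)) / 2 ≤ a ^ 2 * α₁ + a * b * α₂ := by
        rw [hQ]
        nlinarith [mul_le_mul_of_nonneg_left hlow ha]
      calc 0 ≤ 2 - a ^ 2 - (8 + 4 * √2) * -(a ^ 2 * α₁ + a * b * α₂) := by
            nlinarith [mul_mul_one_sub_le_two_sub_sq a, Real.sqrt_nonneg 2]
        _ < 2 - a ^ 2 - (ρ - 1) * -(a ^ 2 * α₁ + a * b * α₂) := by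
            gcongr <;> linarith
        _ = 1 + b ^ 2 + (ρ - 1) * (a ^ 2 * α₁ + a * b * α₂) := by
            linear_combination -hab

theorem case_two_quadratic_form_positive_general
    (d e : ℝ) (hd : d ∈ Set.Ioc (0 : ℝ) 1)
    (α₁ α₂ : ℝ)
    (hα₁ : α₁ = d * e ^ 2 / ((d - e) ^ 2 + e ^ 2))
    (hα₂ : α₂ = d * e * (d - e) / ((d - e) ^ 2 + e ^ 2))
    (a b : ℝ) (hab : a ^ 2 + b ^ 2 = 1) (ha : 0 ≤ a)
    (ρ : ℝ) (hρ₀ : 0 < ρ) (hρ₁ : ρ < 9 + 4 * Real.sqrt 2) :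
    0 < 1 + b ^ 2 + (ρ - 1) * (a ^ 2 * α₁ + a * b * α₂) := by
  subst hα₁ hα₂
  exact one_add_sq_add_mul_quadratic_pos (edge_ratios_sq_add_sq_le hd.1.le hd.2 e) hab ha hρ₀ hρ₁

/-- Positivity of the Case-2 local form: for `d, e ∈ (0, 1]`,
`α₁ = de²/((d-e)² + e²)`, `α₂ = de(d-e)/((d-e)² + e²)`, a unit vector `(a, b)` with
`a ≥ 0`, and any conductivity ratio `0 < ρ < 9 + 4√2`, one has
`1 + b² + (ρ - 1)(a²α₁ + abα₂) > 0`. -/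
theorem case_two_quadratic_form_positive
    (d e : ℝ) (hd : d ∈ Set.Ioc (0 : ℝ) 1) (he : e ∈ Set.Ioc (0 : ℝ) 1)
    (α₁ α₂ : ℝ)
    (hα₁ : α₁ = d * e ^ 2 / ((d - e) ^ 2 + e ^ 2))
    (hα₂ : α₂ = d * e * (d - e) / ((d - e) ^ 2 + e ^ 2))
    (a b : ℝ) (hab : a ^ 2 + b ^ 2 = 1) (ha : 0 ≤ a)
    (ρ : ℝ) (hρ₀ : 0 < ρ) (hρ₁ : ρ < 9 + 4 * Real.sqrt 2) :
    0 < 1 + b ^ 2 + (ρ - 1) * (a ^ 2 * α₁ + a * b * α₂) :=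
  case_two_quadratic_form_positive_general d e hd α₁ α₂ hα₁ hα₂ a b hab ha ρ hρ₀ hρ₁
end
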